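/- Let c > 0 and fix a discretization with δ_x/δ_s ≤ c. Then for every g ∈ L²(S): ‖R_δ^{pd,*} g‖²_{L²(Ω)} ≤ 4√2·π·(c + 1)·‖g‖²_{L²(S)}. In particular, the operator norm of the pixel-driven backprojection R_δ^{pd,*} : L²(S) → L²(Ω) is at most √(4√2·π·(c+1)), uniformly over all such discretizations. -/

import Mathlib

open MeasureTheory Real Set Filter
open scoped BigOperators ENNReal Topology

noncomputable section

/-- The spatial domain: the open Euclidean unit ball in the plane. -/
def Omg : Set (ℝ × ℝ) := {x : ℝ × ℝ | x.1 ^ 2 + x.2 ^ 2 < 1}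

/-- The sinogram domain `[0,π) × (−1,1)`. -/
def Sino : Set (ℝ × ℝ) := Ico (0 : ℝ) π ×ˢ Ioo (-1 : ℝ) 1

/-- `κ(φ) = min(1/|cos φ|, 1/|sin φ|)`. -/
def kap (φ : ℝ) : ℝ := min (1 / |cos φ|) (1 / |sin φ|)

/-- `s̄(φ) = (δ_x/2)(|cos φ| + |sin φ|)`. -/
def sbar (dx φ : ℝ) : ℝ := dx / 2 * (|cos φ| + |sin φ|)

/-- `s̲(φ) = (δ_x/2)·||cos φ| − |sin φ||`. -/
def sund (dx φ : ℝ) : ℝ := dx / 2 * |(|cos φ| - |sin φ|)|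

open Classical in
/-- The ray-driven weight function `ω^rd(φ,t)` (for spatial resolution `dx`). -/
def wrd (dx φ t : ℝ) : ℝ :=
  (1 / dx) *
    (if |t| < sund dx φ then kap φ
    else if |t| < sbar dx φ then (sbar dx φ - |t|) / (dx * |cos φ * sin φ|)
    else if (∃ k : ℤ, φ = k * (π / 2)) ∧ |t| = sbar dx φ then 1 / 2
    else 0)

/-- The pixel-driven weight function `ω^pd(t)` (for detector resolution `ds`). -/
def wpd (ds t : ℝ) : ℝ := (1 / ds ^ 2) * max (ds - |t|) 0

/-- The Radon transform, as a pointwise line-integral formula: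
`[Rf](φ,s) = ∫ f(s·θ_φ + t·θ_φ^⊥) dt`. -/
def Radon (f : ℝ × ℝ → ℝ) (φ s : ℝ) : ℝ :=
  ∫ t : ℝ, f (s * cos φ - t * sin φ, s * sin φ + t * cos φ)

/-- The backprojection `[R*g](x) = ∫_0^π g(φ, x·θ_φ) dφ`. -/
def Backproj (g : ℝ × ℝ → ℝ) (x : ℝ × ℝ) : ℝ :=
  ∫ φ in Ico (0 : ℝ) π, g (φ, x.1 * cos φ + x.2 * sin φ)

/-- A discretization: spatial resolution `N_x`, detector resolution `N_s`, and
`N_φ` strictly increasing angles in `[0,π)`. -/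
structure Disc where
  Nx : ℕ
  Nx_pos : 0 < Nx
  Ns : ℕ
  Ns_pos : 0 < Ns
  Nphi : ℕ
  Nphi_pos : 0 < Nphi
  ang : ℕ → ℝ
  ang_mono : ∀ q q', q < q' → q' < Nphi → ang q < ang q'
  ang_mem : ∀ q, q < Nphi → ang q ∈ Ico (0 : ℝ) π

namespace Disc

variable (D : Disc)

/-- Spatial resolution `δ_x = 2/N_x`. -/
def dx : ℝ := 2 / D.Nx

/-- Detector resolution `δ_s = 2/N_s`. -/
def ds : ℝ := 2 / D.Ns

/-- Pixel centers `x_{ij}`. -/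
def xc (i j : ℕ) : ℝ × ℝ := ((i + 1 / 2) * D.dx - 1, (j + 1 / 2) * D.dx - 1)

/-- Spatial pixels `X_{ij}` (closed squares with center `x_{ij}` and side `δ_x`). -/
def Xpix (i j : ℕ) : Set (ℝ × ℝ) :=
  Icc ((D.xc i j).1 - D.dx / 2) ((D.xc i j).1 + D.dx / 2) ×ˢ
    Icc ((D.xc i j).2 - D.dx / 2) ((D.xc i j).2 + D.dx / 2)

/-- Detector pixel centers `s_p`. -/
def sc (p : ℕ) : ℝ := (p + 1 / 2) * D.ds - 1

/-- Detector pixels `S_p`. -/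
def Spix (p : ℕ) : Set ℝ := Ico (D.sc p - D.ds / 2) (D.sc p + D.ds / 2)

/-- Lower endpoint of the angular pixel `Φ_q`. -/
def philow (q : ℕ) : ℝ := if q = 0 then 0 else (D.ang (q - 1) + D.ang q) / 2

/-- Upper endpoint of the angular pixel `Φ_q`. -/
def phihigh (q : ℕ) : ℝ := if q = D.Nphi - 1 then π else (D.ang q + D.ang (q + 1)) / 2

/-- Angular pixels `Φ_q`. -/
def Phipix (q : ℕ) : Set ℝ := Ico (D.philow q) (D.phihigh q)

/-- Angular resolution `δ_φ = max_q |Φ_q|`. -/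
def dphi : ℝ :=
  (Finset.range D.Nphi).sup' (Finset.nonempty_range_iff.mpr D.Nphi_pos.ne')
    fun q => D.phihigh q - D.philow q

/-- The argument `x_{ij}·θ_q − s_p` at which weights are evaluated. -/
def off (i j q p : ℕ) : ℝ :=
  (D.xc i j).1 * cos (D.ang q) + (D.xc i j).2 * sin (D.ang q) - D.sc p

/-- Generic convolutional discretization of the Radon transform with weight `w`. -/
def discRadon (w : ℝ → ℝ → ℝ) (f : ℝ × ℝ → ℝ) (y : ℝ × ℝ) : ℝ :=
  ∑ q ∈ Finset.range D.Nphi, ∑ p ∈ Finset.range D.Ns,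
    Set.indicator (D.Phipix q ×ˢ D.Spix p) (fun _ => (1 : ℝ)) y *
      ∑ i ∈ Finset.range D.Nx, ∑ j ∈ Finset.range D.Nx,
        w (D.ang q) (D.off i j q p) * ∫ x in D.Xpix i j, f x

/-- Generic convolutional discretization of the backprojection with weight `w`. -/
def discBackproj (w : ℝ → ℝ → ℝ) (g : ℝ × ℝ → ℝ) (x : ℝ × ℝ) : ℝ :=
  ∑ i ∈ Finset.range D.Nx, ∑ j ∈ Finset.range D.Nx,
    Set.indicator (D.Xpix i j) (fun _ => (1 : ℝ)) x *
      ∑ q ∈ Finset.range D.Nphi, ∑ p ∈ Finset.range D.Ns,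
        w (D.ang q) (D.off i j q p) * ∫ y in D.Phipix q ×ˢ D.Spix p, g y

end Disc

/-!
On the pixel `X_{ij}` the backprojection equals
`A_{ij} = ∑_{q,p} ω(x_{ij}·θ_q − s_p) ∫_{Φ_q×S_p} g`. Cauchy–Schwarz on each cell and then over `(q,p)` with weights `ω` gives
`A_{ij}² ≤ (∑_{q,p} ω |Φ_q| δ_s) · ∑_{q,p} ω ∫_{Φ_q×S_p} g²`, and the first factor is at most `π`
because the detector hats `ω(t − s_p)` sum to at most `1/δ_s`. After summing `δ_x² A_{ij}²` over the
pixels and exchanging sums, it remains to bound `δ_x² ∑_{ij} ω(x_{ij}·θ_q − s_p)` for fixed `(q,p)`: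
along the axis in which `θ_q` has a component of size at least `1/√2`, each of the `N_x` rows meets
the support of the hat in at most `2√2 δ_s/δ_x + 1` pixels, each contributing at most `1/δ_s`.
This gives `4√2 + 2 δ_x/δ_s ≤ 4√2 (c + 1)`.
-/

namespace MeasureTheory

variable {α ι : Type*} [MeasurableSpace α] {μ : Measure α}

lemma eLpNorm_two_sq_eq_lintegral (f : α → ℝ) :
    eLpNorm f 2 μ ^ 2 = ∫⁻ x, ‖f x‖ₑ ^ 2 ∂μ := by
  simpa using eLpNorm_nnreal_pow_eq_lintegral (f := f) (μ := μ) (p := 2) two_ne_zero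

lemma MemLp.eLpNorm_two_sq_eq_ofReal_integral {f : α → ℝ} (hf : MemLp f 2 μ) :
    eLpNorm f 2 μ ^ 2 = ENNReal.ofReal (∫ x, f x ^ 2 ∂μ) := by
  rw [eLpNorm_two_sq_eq_lintegral, ofReal_integral_eq_lintegral_ofReal hf.integrable_sq
    (Eventually.of_forall fun x => sq_nonneg (f x))]
  simp_rw [Real.enorm_eq_ofReal_abs, ← ENNReal.ofReal_pow (abs_nonneg _), sq_abs]

lemma sq_integral_le_measureReal_mul_integral_sq [IsFiniteMeasure μ] {f : α → ℝ}
    (hf : MemLp f 2 μ) : (∫ x, f x ∂μ) ^ 2 ≤ μ.real univ * ∫ x, f x ^ 2 ∂μ := by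
  rcases eq_zero_or_neZero μ with rfl | _
  · simp
  have hr : 0 < μ.real univ := measureReal_univ_pos
  have hJensen := (even_two.convexOn_pow (𝕜 := ℝ)).map_average_le (continuous_pow 2).continuousOn
    isClosed_univ (Eventually.of_forall fun x => mem_univ (f x)) (hf.integrable one_le_two)
    hf.integrable_sq
  simp only [average_eq, smul_eq_mul, mul_pow] at hJensen
  calc (∫ x, f x ∂μ) ^ 2 = μ.real univ ^ 2 * ((μ.real univ)⁻¹ ^ 2 * (∫ x, f x ∂μ) ^ 2) := by
        field_simp
    _ ≤ μ.real univ ^ 2 * ((μ.real univ)⁻¹ * ∫ x, f x ^ 2 ∂μ) := by gcongr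
    _ = μ.real univ * ∫ x, f x ^ 2 ∂μ := by field_simp

lemma sum_measure_le_of_pairwiseDisjoint_of_subset {s : Finset ι} {t : ι → Set α} {u : Set α}
    (ht : ∀ i ∈ s, MeasurableSet (t i)) (hd : (s : Set ι).PairwiseDisjoint t)
    (hu : ∀ i ∈ s, t i ⊆ u) : ∑ i ∈ s, μ (t i) ≤ μ u := by
  rw [← measure_biUnion_finset hd ht]
  exact measure_mono (iUnion₂_subset hu)

lemma lintegral_enorm_sum_indicator_mul_sq {s : Finset ι} {E : ι → Set α}
    (hE : ∀ i ∈ s, MeasurableSet (E i))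
    (hd : (s : Set ι).Pairwise (Function.onFun (AEDisjoint μ) E))
    (a : ι → ℝ) :
    ∫⁻ x, ‖∑ i ∈ s, (E i).indicator (fun _ => (1 : ℝ)) x * a i‖ₑ ^ 2 ∂μ
      = ∑ i ∈ s, ‖a i‖ₑ ^ 2 * μ (E i) := by
  have hsep : ∀ᵐ x ∂μ, ∀ i ∈ s, ∀ j ∈ s, i ≠ j → x ∈ E i → x ∉ E j := by
    simp only [eventually_all_finset]
    intro i hi j hj
    by_cases hij : i = j
    · exact Eventually.of_forall fun _ h => absurd hij h
    · filter_upwards [measure_eq_zero_iff_ae_notMem.mp (hd hi hj hij)] with x hx _ hxi hxj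
      exact hx ⟨hxi, hxj⟩
  have hae : ∀ᵐ x ∂μ, ‖∑ i ∈ s, (E i).indicator (fun _ => (1 : ℝ)) x * a i‖ₑ ^ 2
      = ∑ i ∈ s, (E i).indicator (fun _ => ‖a i‖ₑ ^ 2) x := by
    filter_upwards [hsep] with x hx
    by_cases hmem : ∃ i ∈ s, x ∈ E i
    · obtain ⟨i, hi, hxi⟩ := hmem
      have hout : ∀ j ∈ s, j ≠ i → x ∉ E j := fun j hj hji => hx i hi j hj hji.symm hxi
      rw [Finset.sum_eq_single_of_mem i hi fun j hj hji => by simp [hout j hj hji],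
        Finset.sum_eq_single_of_mem i hi fun j hj hji => by simp [hout j hj hji]]
      simp [hxi]
    · push Not at hmem
      rw [Finset.sum_eq_zero fun i hi => by simp [hmem i hi],
        Finset.sum_eq_zero fun i hi => by simp [hmem i hi]]
      simp
  rw [lintegral_congr_ae hae,
    lintegral_finsetSum _ fun i hi => measurable_const.indicator (hE i hi)]
  exact Finset.sum_congr rfl fun i hi => lintegral_indicator_const (hE i hi) _

section AEDisjointProd

variable {β : Type*} [MeasurableSpace β] {ν : Measure β} [SFinite ν] {s s' : Set α}
  {t t' : Set β}

lemma AEDisjoint.set_prod_left (h : AEDisjoint μ s s') (t t' : Set β) :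
    AEDisjoint (μ.prod ν) (s ×ˢ t) (s' ×ˢ t') := by
  rw [AEDisjoint, prod_inter_prod, Measure.prod_prod, h.eq, zero_mul]

lemma AEDisjoint.set_prod_right (s s' : Set α) (h : AEDisjoint ν t t') :
    AEDisjoint (μ.prod ν) (s ×ˢ t) (s' ×ˢ t') := by
  rw [AEDisjoint, prod_inter_prod, Measure.prod_prod, h.eq, mul_zero]

end AEDisjointProd

end MeasureTheory

lemma Finset.sum_sum_sum_sum_comm {ι κ ι' κ' M : Type*} [AddCommMonoid M] (s : Finset ι)
    (t : Finset κ) (u : Finset ι') (v : Finset κ') (f : ι → κ → ι' → κ' → M) :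
    ∑ i ∈ s, ∑ j ∈ t, ∑ k ∈ u, ∑ l ∈ v, f i j k l = ∑ k ∈ u, ∑ l ∈ v, ∑ i ∈ s, ∑ j ∈ t, f i j k l :=
  (sum_congr rfl fun _ _ => sum_comm).trans <| sum_comm.trans <|
    sum_congr rfl fun _ _ => (sum_congr rfl fun _ _ => sum_comm).trans sum_comm

lemma one_le_sqrt_two_mul_max_abs_cos_abs_sin (φ : ℝ) :
    1 ≤ √2 * max |cos φ| |sin φ| := by
  have hmax : 1 ≤ 2 * max |cos φ| |sin φ| ^ 2 := by
    have := cos_sq_add_sin_sq φ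
    rcases le_total |cos φ| |sin φ| with h | h
    · rw [max_eq_right h]; nlinarith [sq_abs (cos φ), sq_abs (sin φ), abs_nonneg (cos φ)]
    · rw [max_eq_left h]; nlinarith [sq_abs (cos φ), sq_abs (sin φ), abs_nonneg (sin φ)]
  have hsq : (√2 * max |cos φ| |sin φ|) ^ 2 = 2 * max |cos φ| |sin φ| ^ 2 := by
    rw [mul_pow, sq_sqrt zero_le_two]
  nlinarith [mul_nonneg (sqrt_nonneg 2) ((abs_nonneg (cos φ)).trans (le_max_left _ (|sin φ|)))]

section PixelDrivenWeight

variable {ι : Type*} {ds : ℝ}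

lemma wpd_nonneg (ds t : ℝ) : 0 ≤ wpd ds t := by
  unfold wpd; positivity

lemma wpd_neg (ds t : ℝ) : wpd ds (-t) = wpd ds t := by
  simp [wpd]

lemma wpd_le (hds : 0 < ds) (t : ℝ) : wpd ds t ≤ 1 / ds := by
  have h : max (ds - |t|) 0 ≤ ds := max_le (by linarith [abs_nonneg t]) hds.le
  calc wpd ds t ≤ 1 / ds ^ 2 * ds := by unfold wpd; gcongr
    _ = 1 / ds := by field_simp

lemma wpd_eq_zero_of_le_abs {t : ℝ} (h : ds ≤ |t|) : wpd ds t = 0 := by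
  simp [wpd, max_eq_right (sub_nonpos.mpr h)]

lemma volume_Ico_inter_Ico_center (a b L : ℝ) :
    volume (Ico (a - L / 2) (a + L / 2) ∩ Ico (b - L / 2) (b + L / 2))
      = ENNReal.ofReal (L - |a - b|) := by
  rw [Ico_inter_Ico, Real.volume_Ico, max_sub_sub_right, min_add_add_right,
    ← max_sub_min_eq_abs']
  ring_nf

/-- The `i`-th hat is `ds⁻²` times the length of the overlap of the `ds`-intervals around `t`
and around `c i`. -/
lemma sum_wpd_sub_le {s : Finset ι} {c : ι → ℝ} (hds : 0 < ds)
    (hd : (s : Set ι).PairwiseDisjoint fun i => Ico (c i - ds / 2) (c i + ds / 2)) (t : ℝ) :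
    ∑ i ∈ s, wpd ds (t - c i) ≤ 1 / ds := by
  have hoverlap : ∑ i ∈ s, max (ds - |t - c i|) 0 ≤ ds := by
    rw [← ENNReal.ofReal_le_ofReal_iff hds.le,
      ENNReal.ofReal_sum_of_nonneg fun i _ => le_max_right _ _]
    simp_rw [ENNReal.ofReal_max, ENNReal.ofReal_zero, max_zero,
      ← volume_Ico_inter_Ico_center]
    calc ∑ i ∈ s, volume (Ico (t - ds / 2) (t + ds / 2) ∩ Ico (c i - ds / 2) (c i + ds / 2))
        ≤ volume (Ico (t - ds / 2) (t + ds / 2)) :=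
          sum_measure_le_of_pairwiseDisjoint_of_subset
            (fun _ _ => measurableSet_Ico.inter measurableSet_Ico)
            (hd.mono fun _ => inter_subset_right) fun _ _ => inter_subset_left
      _ = ENNReal.ofReal ds := by rw [Real.volume_Ico]; ring_nf
  calc ∑ i ∈ s, wpd ds (t - c i) = 1 / ds ^ 2 * ∑ i ∈ s, max (ds - |t - c i|) 0 := by
        rw [Finset.mul_sum]; rfl
    _ ≤ 1 / ds ^ 2 * ds := by gcongr
    _ = 1 / ds := by field_simp

/-- The steps `[α i + β, α (i + 1) + β)` starting at the counted points are disjoint and lie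
in `(-r, r + α)`. -/
lemma card_filter_abs_mul_add_lt_mul_le (N : ℕ) {α : ℝ} (hα : 0 < α) (β : ℝ) {r : ℝ}
    (hr : 0 ≤ r) :
    ((Finset.range N).filter fun i : ℕ => |α * i + β| < r).card * α ≤ 2 * r + α := by
  set s := (Finset.range N).filter fun i : ℕ => |α * i + β| < r
  have hmono : Monotone fun k : ℕ => α * k + β := fun _ _ h => by
    dsimp only; gcongr
  have hvol : ∑ i ∈ s, volume (Ico (α * i + β) (α * (i + 1 : ℕ) + β))
      ≤ volume (Ioo (-r) (r + α)) := by
    refine sum_measure_le_of_pairwiseDisjoint_of_subset (fun _ _ => measurableSet_Ico)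
      (fun i _ j _ hij => hmono.pairwise_disjoint_on_Ico_succ hij) fun i hi x hx => ?_
    have hi := abs_lt.mp (Finset.mem_filter.mp hi).2
    push_cast at hx
    exact ⟨by linarith [hx.1], by linarith [hx.2]⟩
  have hstep : ∀ i : ℕ, α * (i + 1 : ℕ) + β - (α * i + β) = α := fun i => by push_cast; ring
  simp only [Real.volume_Ico, Real.volume_Ioo, hstep, Finset.sum_const, nsmul_eq_mul] at hvol
  rw [← ENNReal.ofReal_natCast, ← ENNReal.ofReal_mul (Nat.cast_nonneg _),
    ENNReal.ofReal_le_ofReal_iff (by linarith)] at hvol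
  linarith

lemma sum_range_wpd_mul_add_le (N : ℕ) (hds : 0 < ds) {α : ℝ} (hα : α ≠ 0) (β : ℝ) :
    ∑ i ∈ Finset.range N, wpd ds (α * i + β) ≤ (2 * ds + |α|) / (ds * |α|) := by
  wlog hpos : 0 < α generalizing α β
  · have hneg : ∀ i : ℕ, wpd ds (α * i + β) = wpd ds (-α * i + -β) := fun i => by
      rw [← wpd_neg]; ring_nf
    simpa only [hneg, abs_neg] using this (neg_ne_zero.mpr hα) (-β)
      (neg_pos.mpr (lt_of_le_of_ne (not_lt.mp hpos) hα))
  have hcard := card_filter_abs_mul_add_lt_mul_le N hpos β hds.le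
  rw [abs_of_pos hpos]
  calc ∑ i ∈ Finset.range N, wpd ds (α * i + β)
      = ∑ i ∈ (Finset.range N).filter fun i : ℕ => |α * i + β| < ds, wpd ds (α * i + β) :=
        (Finset.sum_filter_of_ne fun i _ h => not_le.mp fun hle => h
          (wpd_eq_zero_of_le_abs hle)).symm
    _ ≤ ((Finset.range N).filter fun i : ℕ => |α * i + β| < ds).card * (1 / ds) :=
        Finset.sum_le_card_nsmul _ _ _ (fun i _ => wpd_le hds _) |>.trans_eq (nsmul_eq_mul _ _)
    _ ≤ (2 * ds + α) / (ds * α) := by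
        rw [le_div_iff₀ (by positivity)]
        calc _ = ((Finset.range N).filter fun i : ℕ => |α * i + β| < ds).card * α := by
              field_simp
          _ ≤ 2 * ds + α := hcard

lemma sum_range_sum_range_wpd_le (N : ℕ) (hds : 0 < ds) (a : ℝ) {b : ℝ} (hb : b ≠ 0)
    (e : ℝ) :
    ∑ i ∈ Finset.range N, ∑ j ∈ Finset.range N, wpd ds (a * i + b * j + e)
      ≤ N * ((2 * ds + |b|) / (ds * |b|)) := by
  calc _ ≤ ∑ _i ∈ Finset.range N, (2 * ds + |b|) / (ds * |b|) :=
        Finset.sum_le_sum fun i _ => le_of_eq_of_le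
          (Finset.sum_congr rfl fun j _ => congrArg (wpd ds) (by ring))
          (sum_range_wpd_mul_add_le N hds hb (a * i + e))
    _ = N * ((2 * ds + |b|) / (ds * |b|)) := by simp

end PixelDrivenWeight

lemma Monotone.aedisjoint_Icc_succ {f : ℕ → ℝ} (hf : Monotone f) {i j : ℕ} (hij : i ≠ j) :
    AEDisjoint volume (Icc (f i) (f (i + 1))) (Icc (f j) (f (j + 1))) :=
  (hf.pairwise_disjoint_on_Ico_succ hij).aedisjoint.congr Ico_ae_eq_Icc.symm Ico_ae_eq_Icc.symm

namespace Disc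

variable (D : Disc) {q : ℕ} {g : ℝ × ℝ → ℝ}

lemma dx_pos : 0 < D.dx := by
  have : (0 : ℝ) < D.Nx := Nat.cast_pos.mpr D.Nx_pos
  unfold dx; positivity

lemma ds_pos : 0 < D.ds := by
  have : (0 : ℝ) < D.Ns := Nat.cast_pos.mpr D.Ns_pos
  unfold ds; positivity

lemma Nx_mul_dx : (D.Nx : ℝ) * D.dx = 2 := by
  have : (D.Nx : ℝ) ≠ 0 := Nat.cast_ne_zero.mpr D.Nx_pos.ne'
  unfold dx; field_simp

lemma Ns_mul_ds : (D.Ns : ℝ) * D.ds = 2 := by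
  have : (D.Ns : ℝ) ≠ 0 := Nat.cast_ne_zero.mpr D.Ns_pos.ne'
  unfold ds; field_simp

lemma Xpix_eq (i j : ℕ) :
    D.Xpix i j = Icc (i * D.dx - 1) ((i + 1 : ℕ) * D.dx - 1)
      ×ˢ Icc (j * D.dx - 1) ((j + 1 : ℕ) * D.dx - 1) := by
  simp only [Xpix, xc]; push_cast; ring_nf

lemma Spix_eq (p : ℕ) : D.Spix p = Ico (p * D.ds - 1) ((p + 1 : ℕ) * D.ds - 1) := by
  simp only [Spix, sc]; push_cast; ring_nf

lemma measurableSet_Xpix (i j : ℕ) : MeasurableSet (D.Xpix i j) :=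
  measurableSet_Icc.prod measurableSet_Icc

lemma volume_Xpix (i j : ℕ) : volume (D.Xpix i j) = ENNReal.ofReal (D.dx ^ 2) := by
  rw [Xpix, Measure.volume_eq_prod, Measure.prod_prod, Real.volume_Icc, Real.volume_Icc,
    ← ENNReal.ofReal_mul (by linarith [D.dx_pos])]
  ring_nf

lemma pairwise_aedisjoint_Xpix :
    Pairwise (Function.onFun (AEDisjoint volume) fun z : ℕ × ℕ => D.Xpix z.1 z.2) := by
  have hmono : Monotone fun k : ℕ => k * D.dx - 1 := fun _ _ h => by
    have := D.dx_pos
    dsimp only; gcongr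
  rintro ⟨i, j⟩ ⟨i', j'⟩ hne
  simp only [Function.onFun, Xpix_eq, Measure.volume_eq_prod]
  by_cases hi : i = i'
  · exact AEDisjoint.set_prod_right _ _
      (hmono.aedisjoint_Icc_succ fun hj => hne (by rw [hi, hj]))
  · exact AEDisjoint.set_prod_left (hmono.aedisjoint_Icc_succ hi) _ _

lemma pairwise_disjoint_Spix : Pairwise (Function.onFun Disjoint D.Spix) := by
  have hmono : Monotone fun k : ℕ => k * D.ds - 1 := fun _ _ h => by
    have := D.ds_pos
    dsimp only; gcongr
  intro p p' hne
  rw [Function.onFun, Spix_eq, Spix_eq]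
  exact hmono.pairwise_disjoint_on_Ico_succ hne

/-- The left endpoints of the angular pixels followed by `π`, so that
`Φ_q = [phiEdge q, phiEdge (q + 1))`. -/
def phiEdge (k : ℕ) : ℝ := if k < D.Nphi then D.philow k else π

lemma philow_le_ang (hq : q < D.Nphi) : D.philow q ≤ D.ang q := by
  unfold philow
  split_ifs with h
  · subst h; exact (D.ang_mem 0 hq).1
  · linarith [D.ang_mono (q - 1) q (by omega) hq]

lemma philow_eq_phiEdge (hq : q < D.Nphi) : D.philow q = D.phiEdge q := by
  rw [phiEdge, if_pos hq]

lemma phihigh_eq_phiEdge_succ (hq : q < D.Nphi) : D.phihigh q = D.phiEdge (q + 1) := by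
  unfold phihigh phiEdge
  by_cases h : q = D.Nphi - 1
  · rw [if_pos h, if_neg (by omega)]
  · rw [if_neg h, if_pos (by omega), philow, if_neg q.succ_ne_zero, Nat.add_sub_cancel]

lemma phiEdge_mono : Monotone D.phiEdge := by
  refine monotone_nat_of_le_succ fun k => ?_
  by_cases hk : k < D.Nphi
  · rw [← D.philow_eq_phiEdge hk, ← D.phihigh_eq_phiEdge_succ hk]
    unfold phihigh
    split_ifs with h
    · linarith [D.philow_le_ang hk, (D.ang_mem k hk).2]
    · linarith [D.philow_le_ang hk, D.ang_mono k (k + 1) (by omega) (by omega)]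
  · rw [phiEdge, phiEdge, if_neg hk, if_neg (by omega)]

lemma phiEdge_zero : D.phiEdge 0 = 0 := by
  rw [phiEdge, if_pos D.Nphi_pos, philow, if_pos rfl]

lemma phiEdge_Nphi : D.phiEdge D.Nphi = π := by
  rw [phiEdge, if_neg (lt_irrefl _)]

lemma philow_le_phihigh (hq : q < D.Nphi) : D.philow q ≤ D.phihigh q := by
  rw [D.philow_eq_phiEdge hq, D.phihigh_eq_phiEdge_succ hq]
  exact D.phiEdge_mono q.le_succ

lemma sum_phihigh_sub_philow :
    ∑ q ∈ Finset.range D.Nphi, (D.phihigh q - D.philow q) = π := by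
  rw [Finset.sum_congr rfl fun q hq => by
    rw [D.phihigh_eq_phiEdge_succ (Finset.mem_range.mp hq),
      D.philow_eq_phiEdge (Finset.mem_range.mp hq)],
    Finset.sum_range_sub, phiEdge_Nphi, phiEdge_zero, sub_zero]

lemma Phipix_eq (hq : q < D.Nphi) : D.Phipix q = Ico (D.phiEdge q) (D.phiEdge (q + 1)) := by
  rw [Phipix, D.philow_eq_phiEdge hq, D.phihigh_eq_phiEdge_succ hq]

lemma measurableSet_cell (q p : ℕ) : MeasurableSet (D.Phipix q ×ˢ D.Spix p) :=
  measurableSet_Ico.prod measurableSet_Ico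

lemma volume_cell (hq : q < D.Nphi) (p : ℕ) :
    volume (D.Phipix q ×ˢ D.Spix p) = ENNReal.ofReal ((D.phihigh q - D.philow q) * D.ds) := by
  rw [Measure.volume_eq_prod, Measure.prod_prod, Phipix, Spix, Real.volume_Ico, Real.volume_Ico,
    ← ENNReal.ofReal_mul (sub_nonneg.mpr (D.philow_le_phihigh hq))]
  ring_nf

lemma pairwiseDisjoint_cell :
    ((Finset.range D.Nphi ×ˢ Finset.range D.Ns : Finset (ℕ × ℕ)) : Set (ℕ × ℕ)).PairwiseDisjoint
      fun z => D.Phipix z.1 ×ˢ D.Spix z.2 := by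
  rintro ⟨q, p⟩ hz ⟨q', p'⟩ hz' hne
  simp only [Finset.coe_product, mem_prod, Finset.coe_range, mem_Iio] at hz hz'
  simp only [Function.onFun, Set.disjoint_prod]
  by_cases hq : q = q'
  · exact Or.inr (D.pairwise_disjoint_Spix fun hp => hne (by rw [hq, hp]))
  · left
    rw [D.Phipix_eq hz.1, D.Phipix_eq hz'.1]
    exact D.phiEdge_mono.pairwise_disjoint_on_Ico_succ hq

lemma cell_subset (hq : q < D.Nphi) {p : ℕ} (hp : p < D.Ns) :
    D.Phipix q ×ˢ D.Spix p ⊆ Ico 0 π ×ˢ Ico (-1) 1 := by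
  have hNs : ((p + 1 : ℕ) : ℝ) * D.ds ≤ D.Ns * D.ds := by
    gcongr
    · exact D.ds_pos.le
    · exact hp
  rw [D.Phipix_eq hq, D.Spix_eq, ← D.phiEdge_zero, ← D.phiEdge_Nphi]
  refine prod_mono (Ico_subset_Ico (D.phiEdge_mono (Nat.zero_le q)) (D.phiEdge_mono hq))
    (Ico_subset_Ico ?_ ?_)
  · linarith [mul_nonneg (Nat.cast_nonneg p) D.ds_pos.le]
  · linarith [D.Ns_mul_ds]

/-- The cells touch the edge `s = -1` that `Sino` leaves out only in a null set. -/
lemma restrict_Sino_restrict_cell (hq : q < D.Nphi) {p : ℕ} (hp : p < D.Ns) :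
    (volume.restrict Sino).restrict (D.Phipix q ×ˢ D.Spix p)
      = volume.restrict (D.Phipix q ×ˢ D.Spix p) := by
  have hSino : Sino =ᵐ[volume] Ico 0 π ×ˢ Ico (-1 : ℝ) 1 := by
    rw [Measure.volume_eq_prod]
    exact Measure.set_prod_ae_eq (ae_eq_refl _) Ioo_ae_eq_Ico
  rw [Measure.restrict_restrict (D.measurableSet_cell q p)]
  refine Measure.restrict_congr_set (((ae_eq_refl _).inter hSino).trans ?_)
  rw [inter_eq_left.mpr (D.cell_subset hq hp)]
  exact ae_eq_refl _

/-- Along the coordinate direction in which `θ_q` has its larger component (of size at least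
`1/√2`), the offsets `x_{ij}·θ_q − s_p` form an arithmetic progression with step at least
`δ_x/√2`, so each row meets the support of the hat in few pixels. -/
lemma sq_dx_mul_sum_wpd_off_le (q p : ℕ) :
    D.dx ^ 2 * ∑ i ∈ Finset.range D.Nx, ∑ j ∈ Finset.range D.Nx, wpd D.ds (D.off i j q p)
      ≤ 4 * √2 + 2 * (D.dx / D.ds) := by
  have hdx := D.dx_pos
  set φ := D.ang q
  set e := (D.dx / 2 - 1) * (cos φ + sin φ) - D.sc p
  obtain ⟨γ, hγ, hsum⟩ : ∃ γ : ℝ, 1 ≤ √2 * |γ| ∧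
      ∑ i ∈ Finset.range D.Nx, ∑ j ∈ Finset.range D.Nx, wpd D.ds (D.off i j q p)
        ≤ D.Nx * ((2 * D.ds + |D.dx * γ|) / (D.ds * |D.dx * γ|)) := by
    have hφ := one_le_sqrt_two_mul_max_abs_cos_abs_sin φ
    have hne : ∀ γ : ℝ, 1 ≤ √2 * |γ| → D.dx * γ ≠ 0 := fun γ hγ h => by
      rcases mul_eq_zero.mp h with h | h
      · exact hdx.ne' h
      · rw [h, abs_zero, mul_zero] at hγ; linarith
    rcases le_total |cos φ| |sin φ| with h | h
    · rw [max_eq_right h] at hφ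
      refine ⟨sin φ, hφ, le_of_eq_of_le (Finset.sum_congr rfl fun i _ => Finset.sum_congr rfl
        fun j _ => congrArg (wpd D.ds) ?_)
        (sum_range_sum_range_wpd_le _ D.ds_pos (D.dx * cos φ) (hne _ hφ) e)⟩
      simp only [off, xc, e]; ring
    · rw [max_eq_left h] at hφ
      refine ⟨cos φ, hφ, le_of_eq_of_le (Finset.sum_comm.trans (Finset.sum_congr rfl fun j _ =>
        Finset.sum_congr rfl fun i _ => congrArg (wpd D.ds) ?_))
        (sum_range_sum_range_wpd_le _ D.ds_pos (D.dx * sin φ) (hne _ hφ) e)⟩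
      simp only [off, xc, e]; ring
  have hγ0 : 0 < |γ| := by
    by_contra h
    rw [not_lt.mp h |>.antisymm (abs_nonneg γ), mul_zero] at hγ
    linarith
  have hNx : (D.Nx : ℝ) = 2 / D.dx := eq_div_of_mul_eq hdx.ne' D.Nx_mul_dx
  calc D.dx ^ 2 * ∑ i ∈ Finset.range D.Nx, ∑ j ∈ Finset.range D.Nx, wpd D.ds (D.off i j q p)
      ≤ D.dx ^ 2 * (D.Nx * ((2 * D.ds + |D.dx * γ|) / (D.ds * |D.dx * γ|))) := by gcongr
    _ = 4 / |γ| + 2 * (D.dx / D.ds) := by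
        rw [hNx, abs_mul, abs_of_pos hdx]
        field_simp [D.ds_pos.ne']
        ring
    _ ≤ 4 * √2 + 2 * (D.dx / D.ds) := by
        gcongr
        rw [div_le_iff₀ hγ0]
        linarith

lemma sum_wpd_off_le (i j q : ℕ) :
    ∑ p ∈ Finset.range D.Ns, wpd D.ds (D.off i j q p) ≤ 1 / D.ds :=
  sum_wpd_sub_le D.ds_pos (D.pairwise_disjoint_Spix.set_pairwise _) _

lemma sum_sum_wpd_off_mul_volume_cell_le (i j : ℕ) :
    ∑ q ∈ Finset.range D.Nphi, ∑ p ∈ Finset.range D.Ns,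
      wpd D.ds (D.off i j q p) * ((D.phihigh q - D.philow q) * D.ds) ≤ π := by
  calc _ = ∑ q ∈ Finset.range D.Nphi, (D.phihigh q - D.philow q) * D.ds *
        ∑ p ∈ Finset.range D.Ns, wpd D.ds (D.off i j q p) := by
        simp only [Finset.mul_sum, mul_comm]
    _ ≤ ∑ q ∈ Finset.range D.Nphi, (D.phihigh q - D.philow q) * D.ds * (1 / D.ds) :=
        Finset.sum_le_sum fun q hq => by
          have := sub_nonneg.mpr (D.philow_le_phihigh (Finset.mem_range.mp hq))
          have := D.ds_pos
          gcongr
          exact D.sum_wpd_off_le i j q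
    _ = π := by
        rw [← D.sum_phihigh_sub_philow]
        exact Finset.sum_congr rfl fun q _ => by field_simp [D.ds_pos.ne']

def pdCoeff (g : ℝ × ℝ → ℝ) (i j : ℕ) : ℝ :=
  ∑ q ∈ Finset.range D.Nphi, ∑ p ∈ Finset.range D.Ns,
    wpd D.ds (D.off i j q p) * ∫ y in D.Phipix q ×ˢ D.Spix p, g y

lemma memLp_cell (hg : MemLp g 2 (volume.restrict Sino)) {q p : ℕ} (hq : q < D.Nphi)
    (hp : p < D.Ns) : MemLp g 2 (volume.restrict (D.Phipix q ×ˢ D.Spix p)) := by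
  simpa only [D.restrict_Sino_restrict_cell hq hp] using hg.restrict (D.Phipix q ×ˢ D.Spix p)

lemma sq_integral_cell_le (hg : MemLp g 2 (volume.restrict Sino)) {q p : ℕ} (hq : q < D.Nphi)
    (hp : p < D.Ns) :
    (∫ y in D.Phipix q ×ˢ D.Spix p, g y) ^ 2
      ≤ (D.phihigh q - D.philow q) * D.ds * ∫ y in D.Phipix q ×ˢ D.Spix p, g y ^ 2 := by
  have hvol := D.volume_cell hq p
  have : IsFiniteMeasure (volume.restrict (D.Phipix q ×ˢ D.Spix p)) :=
    isFiniteMeasure_restrict.mpr (hvol ▸ ENNReal.ofReal_ne_top)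
  have := sq_integral_le_measureReal_mul_integral_sq (D.memLp_cell hg hq hp)
  rwa [measureReal_restrict_apply_univ, measureReal_def, hvol,
    ENNReal.toReal_ofReal (mul_nonneg (sub_nonneg.mpr (D.philow_le_phihigh hq)) D.ds_pos.le)]
    at this

lemma sq_pdCoeff_le (hg : MemLp g 2 (volume.restrict Sino)) (i j : ℕ) :
    D.pdCoeff g i j ^ 2 ≤ π * ∑ q ∈ Finset.range D.Nphi, ∑ p ∈ Finset.range D.Ns,
      wpd D.ds (D.off i j q p) * ∫ y in D.Phipix q ×ˢ D.Spix p, g y ^ 2 := by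
  set w : ℕ → ℕ → ℝ := fun q p => wpd D.ds (D.off i j q p)
  set m : ℕ → ℝ := fun q => (D.phihigh q - D.philow q) * D.ds
  set I : ℕ → ℕ → ℝ := fun q p => ∫ y in D.Phipix q ×ˢ D.Spix p, g y
  set J : ℕ → ℕ → ℝ := fun q p => ∫ y in D.Phipix q ×ˢ D.Spix p, g y ^ 2
  have hw : ∀ q p, 0 ≤ w q p := fun q p => wpd_nonneg _ _
  have hJ : ∀ q p, 0 ≤ J q p := fun q p => integral_nonneg fun y => sq_nonneg (g y)
  have hmem : ∀ z ∈ Finset.range D.Nphi ×ˢ Finset.range D.Ns, z.1 < D.Nphi ∧ z.2 < D.Ns :=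
    fun z hz => by simpa only [Finset.mem_product, Finset.mem_range] using hz
  have hCS : (∑ z ∈ Finset.range D.Nphi ×ˢ Finset.range D.Ns, w z.1 z.2 * I z.1 z.2) ^ 2
      ≤ (∑ z ∈ Finset.range D.Nphi ×ˢ Finset.range D.Ns, w z.1 z.2 * m z.1)
        * ∑ z ∈ Finset.range D.Nphi ×ˢ Finset.range D.Ns, w z.1 z.2 * J z.1 z.2 := by
    refine Finset.sum_sq_le_sum_mul_sum_of_sq_le_mul _
      (fun z hz => mul_nonneg (hw _ _) ?_) (fun z _ => mul_nonneg (hw _ _) (hJ _ _))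
      fun z hz => ?_
    · exact mul_nonneg (sub_nonneg.mpr (D.philow_le_phihigh (hmem z hz).1)) D.ds_pos.le
    · calc (w z.1 z.2 * I z.1 z.2) ^ 2 = w z.1 z.2 ^ 2 * I z.1 z.2 ^ 2 := mul_pow _ _ _
        _ ≤ w z.1 z.2 ^ 2 * (m z.1 * J z.1 z.2) := by
            gcongr; exact D.sq_integral_cell_le hg (hmem z hz).1 (hmem z hz).2
        _ = w z.1 z.2 * m z.1 * (w z.1 z.2 * J z.1 z.2) := by ring
  rw [Finset.sum_product' (f := fun q p => w q p * I q p),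
    Finset.sum_product' (f := fun q p => w q p * m q),
    Finset.sum_product' (f := fun q p => w q p * J q p)] at hCS
  exact hCS.trans (mul_le_mul_of_nonneg_right (D.sum_sum_wpd_off_mul_volume_cell_le i j)
    (Finset.sum_nonneg fun q _ => Finset.sum_nonneg fun p _ => mul_nonneg (hw _ _) (hJ _ _)))

lemma sum_integral_cell_sq_le (hg : MemLp g 2 (volume.restrict Sino)) :
    ∑ q ∈ Finset.range D.Nphi, ∑ p ∈ Finset.range D.Ns, ∫ y in D.Phipix q ×ˢ D.Spix p, g y ^ 2
      ≤ ∫ y in Sino, g y ^ 2 := by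
  rw [← Finset.sum_product' (f := fun q p => ∫ y in D.Phipix q ×ˢ D.Spix p, g y ^ 2)]
  calc _ = ∑ z ∈ Finset.range D.Nphi ×ˢ Finset.range D.Ns,
        ∫ y in D.Phipix z.1 ×ˢ D.Spix z.2, g y ^ 2 ∂volume.restrict Sino :=
        Finset.sum_congr rfl fun z hz => by
          obtain ⟨hq, hp⟩ := Finset.mem_product.mp hz
          rw [D.restrict_Sino_restrict_cell (Finset.mem_range.mp hq) (Finset.mem_range.mp hp)]
    _ = ∫ y in ⋃ z ∈ Finset.range D.Nphi ×ˢ Finset.range D.Ns, D.Phipix z.1 ×ˢ D.Spix z.2,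
          g y ^ 2 ∂volume.restrict Sino :=
        (integral_biUnion_finset _ (fun z _ => D.measurableSet_cell z.1 z.2)
          D.pairwiseDisjoint_cell fun _ _ => hg.integrable_sq.integrableOn).symm
    _ ≤ ∫ y in Sino, g y ^ 2 :=
        setIntegral_le_integral hg.integrable_sq (Eventually.of_forall fun y => sq_nonneg (g y))

lemma sum_sq_dx_mul_sq_pdCoeff_le (hg : MemLp g 2 (volume.restrict Sino)) :
    ∑ i ∈ Finset.range D.Nx, ∑ j ∈ Finset.range D.Nx, D.dx ^ 2 * D.pdCoeff g i j ^ 2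
      ≤ π * (4 * √2 + 2 * (D.dx / D.ds)) * ∫ y in Sino, g y ^ 2 := by
  set J : ℕ → ℕ → ℝ := fun q p => ∫ y in D.Phipix q ×ˢ D.Spix p, g y ^ 2
  calc _ ≤ ∑ i ∈ Finset.range D.Nx, ∑ j ∈ Finset.range D.Nx, D.dx ^ 2 *
        (π * ∑ q ∈ Finset.range D.Nphi, ∑ p ∈ Finset.range D.Ns,
          wpd D.ds (D.off i j q p) * J q p) := by
        gcongr with i _ j _; exact D.sq_pdCoeff_le hg i j
    _ = π * ∑ q ∈ Finset.range D.Nphi, ∑ p ∈ Finset.range D.Ns, (D.dx ^ 2 *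
        ∑ i ∈ Finset.range D.Nx, ∑ j ∈ Finset.range D.Nx, wpd D.ds (D.off i j q p)) * J q p := by
        simp only [Finset.mul_sum, Finset.sum_mul]
        rw [Finset.sum_sum_sum_sum_comm]
        ring_nf
    _ ≤ π * ∑ q ∈ Finset.range D.Nphi, ∑ p ∈ Finset.range D.Ns,
        (4 * √2 + 2 * (D.dx / D.ds)) * J q p := by
        gcongr with q _ p _
        exact D.sq_dx_mul_sum_wpd_off_le q p
    _ = π * (4 * √2 + 2 * (D.dx / D.ds)) *
        ∑ q ∈ Finset.range D.Nphi, ∑ p ∈ Finset.range D.Ns, J q p := by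
        simp only [Finset.mul_sum, mul_assoc]
    _ ≤ π * (4 * √2 + 2 * (D.dx / D.ds)) * ∫ y in Sino, g y ^ 2 := by
        have := div_pos D.dx_pos D.ds_pos
        gcongr
        exact D.sum_integral_cell_sq_le hg

lemma eLpNorm_discBackproj_wpd_sq_le (g : ℝ × ℝ → ℝ) :
    eLpNorm (D.discBackproj (fun _ t => wpd D.ds t) g) 2 (volume.restrict Omg) ^ 2
      ≤ ENNReal.ofReal
          (∑ i ∈ Finset.range D.Nx, ∑ j ∈ Finset.range D.Nx, D.dx ^ 2 * D.pdCoeff g i j ^ 2) := by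
  have hF : D.discBackproj (fun _ t => wpd D.ds t) g = fun x =>
      ∑ z ∈ Finset.range D.Nx ×ˢ Finset.range D.Nx,
        (D.Xpix z.1 z.2).indicator (fun _ => (1 : ℝ)) x * D.pdCoeff g z.1 z.2 :=
    funext fun x => (Finset.sum_product' _ _ _).symm
  calc _ ≤ eLpNorm (D.discBackproj (fun _ t => wpd D.ds t) g) 2 volume ^ 2 := by
        gcongr
        exact Measure.restrict_le_self
    _ = ∑ z ∈ Finset.range D.Nx ×ˢ Finset.range D.Nx,
          ‖D.pdCoeff g z.1 z.2‖ₑ ^ 2 * volume (D.Xpix z.1 z.2) := by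
        rw [eLpNorm_two_sq_eq_lintegral, hF]
        exact lintegral_enorm_sum_indicator_mul_sq (fun z _ => D.measurableSet_Xpix z.1 z.2)
          (D.pairwise_aedisjoint_Xpix.set_pairwise _) _
    _ = _ := by
        rw [← Finset.sum_product' (f := fun i j => D.dx ^ 2 * D.pdCoeff g i j ^ 2),
          ENNReal.ofReal_sum_of_nonneg fun z _ => by positivity]
        refine Finset.sum_congr rfl fun z _ => ?_
        rw [D.volume_Xpix, Real.enorm_eq_ofReal_abs, ← ENNReal.ofReal_pow (abs_nonneg _), sq_abs,
          ← ENNReal.ofReal_mul (sq_nonneg _), mul_comm]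

end Disc

theorem pixelBackproj_uniformly_bounded_general (c : ℝ) (D : Disc) (hr : D.dx / D.ds ≤ c)
    (g : ℝ × ℝ → ℝ) (hg : MemLp g 2 (volume.restrict Sino)) :
    eLpNorm (D.discBackproj (fun _ t => wpd D.ds t) g) 2 (volume.restrict Omg) ^ 2
      ≤ ENNReal.ofReal (4 * Real.sqrt 2 * π * (c + 1)) *
          eLpNorm g 2 (volume.restrict Sino) ^ 2 := by
  have hratio : 0 < D.dx / D.ds := div_pos D.dx_pos D.ds_pos
  have hc : 0 ≤ c := hratio.le.trans hr
  have hconst : π * (4 * √2 + 2 * (D.dx / D.ds)) ≤ 4 * √2 * π * (c + 1) := by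
    calc _ ≤ π * (4 * √2 + 4 * √2 * c) := by gcongr; nlinarith [one_lt_sqrt_two]
      _ = 4 * √2 * π * (c + 1) := by ring
  calc _ ≤ ENNReal.ofReal
        (∑ i ∈ Finset.range D.Nx, ∑ j ∈ Finset.range D.Nx, D.dx ^ 2 * D.pdCoeff g i j ^ 2) :=
        D.eLpNorm_discBackproj_wpd_sq_le g
    _ ≤ ENNReal.ofReal (4 * √2 * π * (c + 1) * ∫ y in Sino, g y ^ 2) := by
        gcongr
        exact (D.sum_sq_dx_mul_sq_pdCoeff_le hg).trans (by gcongr)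
    _ = _ := by
        rw [ENNReal.ofReal_mul (mul_nonneg (by positivity) (by linarith)),
          hg.eLpNorm_two_sq_eq_ofReal_integral]

/-- uniform `L²` bound for the pixel-driven backprojection when `δ_x/δ_s ≤ c`. -/
theorem pixelBackproj_uniformly_bounded (c : ℝ) (hc : 0 < c) (D : Disc) (hr : D.dx / D.ds ≤ c)
    (g : ℝ × ℝ → ℝ) (hg : MemLp g 2 (volume.restrict Sino))
    (hsupp : ∀ y, y ∉ Sino → g y = 0) :
    eLpNorm (D.discBackproj (fun _ t => wpd D.ds t) g) 2 (volume.restrict Omg) ^ 2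
      ≤ ENNReal.ofReal (4 * Real.sqrt 2 * π * (c + 1)) *
          eLpNorm g 2 (volume.restrict Sino) ^ 2 :=
  pixelBackproj_uniformly_bounded_general c D hr g hg
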